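/- Let γ>0, β∈(0,1], λ≥0 and 0≤r≤t. Then the function v(s) := λ/(1+γβ(t−s)λ^β)^{1/β} for s≤t, and v(s):=0 for s>t, satisfies v(r) = λ·1_{[0,t]}(r) − γ∫_r^T v(s)^{1+β} ds for any T≥t. -/

import Mathlib

/-!
On `s ≤ t` the function `v` is the explicit solution of the Bernoulli equation
`v' = γ v ^ (1 + β)` with `v t = λ` (the substitution `u = v ^ (-β)` makes it linear, `u' = -γβ`),
and it vanishes on `(t, ∞)`. The integral equation is therefore the fundamental theorem of calculus
on `[r, t]`, the interval `(t, T]` contributing nothing.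
-/

open MeasureTheory Set

noncomputable def bernoulliSolution (γ β lam t s : ℝ) : ℝ :=
  lam * (1 + γ * β * (t - s) * lam ^ β) ^ (-β⁻¹)

section BernoulliSolution

variable {γ β lam t : ℝ}

@[simp]
lemma bernoulliSolution_self : bernoulliSolution γ β lam t t = lam := by
  simp [bernoulliSolution]

lemma div_rpow_eq_bernoulliSolution {s : ℝ} (h : 0 ≤ 1 + γ * β * (t - s) * lam ^ β) :
    lam / (1 + γ * β * (t - s) * lam ^ β) ^ (1 / β) = bernoulliSolution γ β lam t s := by
  rw [bernoulliSolution, Real.rpow_neg h, one_div, div_eq_mul_inv]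

lemma hasDerivAt_bernoulliSolution (hβ : 0 < β) (hlam : 0 ≤ lam) {s : ℝ}
    (hs : 0 < 1 + γ * β * (t - s) * lam ^ β) :
    HasDerivAt (bernoulliSolution γ β lam t) (γ * bernoulliSolution γ β lam t s ^ (1 + β)) s := by
  have hbase : HasDerivAt (fun s => 1 + γ * β * (t - s) * lam ^ β) (-(γ * β * lam ^ β)) s := by
    simpa using
      (((hasDerivAt_id s).const_sub t).const_mul (γ * β)).mul_const (lam ^ β) |>.const_add 1
  refine ((hbase.rpow_const (Or.inl hs.ne')).const_mul lam).congr_deriv ?_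
  have hexp : -β⁻¹ * (1 + β) = -β⁻¹ - 1 := by field_simp; ring
  rw [bernoulliSolution, Real.mul_rpow hlam (Real.rpow_nonneg hs.le _), ← Real.rpow_mul hs.le,
    hexp, Real.rpow_one_add' hlam (by linarith)]
  field_simp

lemma continuousOn_bernoulliSolution (hβ : 0 < β) (hlam : 0 ≤ lam) (hγ : 0 ≤ γ) :
    ContinuousOn (bernoulliSolution γ β lam t) (Iic t) := fun s hs => by
  have : 0 ≤ t - s := sub_nonneg.2 hs
  exact (hasDerivAt_bernoulliSolution hβ hlam (by positivity)).continuousAt.continuousWithinAt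

lemma intervalIntegrable_bernoulliSolution_rpow (hβ : 0 < β) (hlam : 0 ≤ lam) (hγ : 0 ≤ γ)
    {r : ℝ} (hrt : r ≤ t) :
    IntervalIntegrable (fun s => bernoulliSolution γ β lam t s ^ (1 + β)) volume r t := by
  refine ContinuousOn.intervalIntegrable ?_
  rw [uIcc_of_le hrt]
  exact ((continuousOn_bernoulliSolution hβ hlam hγ).mono Icc_subset_Iic_self).rpow_const
    fun _ _ => Or.inr (by linarith)

lemma mul_integral_bernoulliSolution_rpow (hβ : 0 < β) (hlam : 0 ≤ lam) (hγ : 0 ≤ γ)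
    {r : ℝ} (hrt : r ≤ t) :
    γ * ∫ s in r..t, bernoulliSolution γ β lam t s ^ (1 + β) =
      lam - bernoulliSolution γ β lam t r := by
  rw [← intervalIntegral.integral_const_mul,
    intervalIntegral.integral_eq_sub_of_hasDerivAt (f := bernoulliSolution γ β lam t)
      (fun s hs => ?_) ((intervalIntegrable_bernoulliSolution_rpow hβ hlam hγ hrt).const_mul γ),
    bernoulliSolution_self]
  rw [uIcc_of_le hrt] at hs
  have : 0 ≤ t - s := sub_nonneg.2 hs.2
  exact hasDerivAt_bernoulliSolution hβ hlam (by positivity)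

end BernoulliSolution

lemma intervalIntegral_eq_of_eq_zero_on_Ioc {w : ℝ → ℝ} {r t T : ℝ}
    (hw : IntervalIntegrable w volume r t) (htT : t ≤ T) (hzero : ∀ s ∈ Ioc t T, w s = 0) :
    ∫ s in r..T, w s = ∫ s in r..t, w s := by
  have hzero' : EqOn w 0 (uIoc t T) := by
    rw [uIoc_of_le htT]
    exact hzero
  have hwT : IntervalIntegrable w volume t T :=
    (intervalIntegrable_const (c := (0 : ℝ))).congr fun s hs => (hzero' hs).symm
  rw [← intervalIntegral.integral_add_adjacent_intervals hw hwT,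
    intervalIntegral.integral_zero_ae (ae_of_all _ fun s hs => hzero' hs), add_zero]

theorem log_laplace_dirac_impulse_general
    (γ β lam r t : ℝ) (hγ : 0 < γ) (hβ0 : 0 < β) (hlam : 0 ≤ lam)
    (hr : 0 ≤ r) (hrt : r ≤ t)
    (v : ℝ → ℝ)
    (hv : ∀ s, v s = if s ≤ t then lam / (1 + γ * β * (t - s) * lam ^ β) ^ (1 / β) else 0) :
    ∀ T : ℝ, t ≤ T →
      v r = Set.indicator (Icc (0:ℝ) t) (fun _ => lam) r - γ * ∫ s in r..T, v s ^ (1 + β) := by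
  intro T hT
  have hv_le : ∀ s ≤ t, v s = bernoulliSolution γ β lam t s := fun s hs => by
    have : 0 ≤ t - s := sub_nonneg.2 hs
    rw [hv s, if_pos hs, div_rpow_eq_bernoulliSolution (by positivity)]
  have hv_on : EqOn (fun s => v s ^ (1 + β)) (fun s => bernoulliSolution γ β lam t s ^ (1 + β))
      (uIcc r t) := fun s hs => by
    rw [uIcc_of_le hrt] at hs
    simp only [hv_le s hs.2]
  have hint : IntervalIntegrable (fun s => v s ^ (1 + β)) volume r t :=
    (intervalIntegrable_bernoulliSolution_rpow hβ0 hlam hγ.le hrt).congr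
      fun s hs => (hv_on (uIoc_subset_uIcc hs)).symm
  have hvanish : ∀ s ∈ Ioc t T, v s ^ (1 + β) = 0 := fun s hs => by
    rw [hv s, if_neg (not_le.2 hs.1), Real.zero_rpow (by linarith)]
  rw [indicator_of_mem (mem_Icc.2 ⟨hr, hrt⟩),
    intervalIntegral_eq_of_eq_zero_on_Ioc hint hT hvanish, intervalIntegral.integral_congr hv_on,
    mul_integral_bernoulliSolution_rpow hβ0 hlam hγ.le hrt, hv_le r hrt]
  ring

theorem log_laplace_dirac_impulse
    (γ β lam r t : ℝ) (hγ : 0 < γ) (hβ0 : 0 < β) (hβ1 : β ≤ 1) (hlam : 0 ≤ lam)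
    (hr : 0 ≤ r) (hrt : r ≤ t)
    (v : ℝ → ℝ)
    (hv : ∀ s, v s = if s ≤ t then lam / (1 + γ * β * (t - s) * lam ^ β) ^ (1 / β) else 0) :
    ∀ T : ℝ, t ≤ T →
      v r = Set.indicator (Icc (0:ℝ) t) (fun _ => lam) r - γ * ∫ s in r..T, v s ^ (1 + β) :=
  log_laplace_dirac_impulse_general γ β lam r t hγ hβ0 hlam hr hrt v hv
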